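/- In the ordered field ℝ(X) of rational functions ordered by sign of leading-coefficient quotient, the submonoid P' = ⟨X³⟩ + ⟨X + nX² : n ∈ ℕ⟩ of the monoid P = ⟨Xⁿ : n ∈ ℕ⟩ has set of atoms {X³} ∪ {X + nX² : n ∈ ℕ}, and P' cannot be generated by any increasing sequence. -/

import Mathlib

open scoped Polynomial

/-- In the ordered field `ℝ(X)` (ordered by the sign of the quotient of leading coefficients),
a rational function is positive iff the leading coefficient of its numerator is positive
(recall that `RatFunc.denom` is monic). -/
noncomputable def RatFuncPos (f : RatFunc ℝ) : Prop :=
  0 < f.num.leadingCoeff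

/-- The order relation `f ≤ g` on `ℝ(X)` induced by `RatFuncPos`. -/
noncomputable def RatFuncLe (f g : RatFunc ℝ) : Prop :=
  f = g ∨ RatFuncPos (g - f)

/-- `a` is an atom of the additive submonoid `P`. -/
def IsAtomOf (P : AddSubmonoid (RatFunc ℝ)) (a : RatFunc ℝ) : Prop :=
  a ∈ P ∧ a ≠ 0 ∧ ∀ x ∈ P, ∀ y ∈ P, a = x + y → x = 0 ∨ y = 0

/-! Every element of `P'` is `c X³ + k X + m X²` with `c k m : ℕ` and `m = 0` whenever `k = 0`.
Since `X, X², X³` are linearly independent these coefficients are unique, and `c + k` is additive,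
so the generators (those with `c + k = 1`) are atoms. An atom lies in every generating set, so an
increasing generating sequence contains `X³`, say at index `j`, and each of the infinitely many
`X + n X²`; these are all smaller than `X³`, so they sit at indices below `j`, which is absurd. -/

open RatFunc

lemma IsAtomOf.mem_of_closure_eq {S : Set (RatFunc ℝ)} {P : AddSubmonoid (RatFunc ℝ)}
    (hS : AddSubmonoid.closure S = P) {a : RatFunc ℝ} (ha : IsAtomOf P a) : a ∈ S := by
  obtain ⟨haP, ha0, hsplit⟩ := ha
  subst hS
  suffices ∀ x ∈ AddSubmonoid.closure S, x ≠ 0 →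
      (∀ y ∈ AddSubmonoid.closure S, ∀ z ∈ AddSubmonoid.closure S, x = y + z → y = 0 ∨ z = 0) →
      x ∈ S from this a haP ha0 hsplit
  intro x hx
  induction hx using AddSubmonoid.closure_induction with
  | mem y hy => exact fun _ _ => hy
  | zero => exact fun h => absurd rfl h
  | add y z hy hz ihy ihz =>
    intro hyz hsplit
    rcases hsplit y hy z hz rfl with rfl | rfl
    · rw [zero_add] at hyz hsplit ⊢
      exact ihz hyz hsplit
    · rw [add_zero] at hyz hsplit ⊢
      exact ihy hyz hsplit

lemma not_monotone_of_infinite_not_above {α : Type*} (r : α → α → Prop) {u : ℕ → α} {b : α}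
    (hb : b ∈ Set.range u) {a : ℕ → α} (ha : Function.Injective a)
    (hau : ∀ n, a n ∈ Set.range u) (hab : ∀ n, ¬ r b (a n)) :
    ¬ ∀ m n, m ≤ n → r (u m) (u n) := by
  intro hu
  obtain ⟨j, rfl⟩ := hb
  have hbefore : ∀ n, a n ∈ u '' Set.Iio j := by
    intro n
    obtain ⟨i, hi⟩ := hau n
    refine ⟨i, Set.mem_Iio.mpr (lt_of_not_ge fun hji => hab n ?_), hi⟩
    exact hi ▸ hu j i hji
  exact Set.infinite_of_injective_forall_mem ha hbefore ((Set.finite_Iio j).image u)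

noncomputable def generatorsP' : Set (RatFunc ℝ) :=
  {X ^ 3} ∪ {f | ∃ n : ℕ, 0 < n ∧ f = X + (n : RatFunc ℝ) * X ^ 2}

noncomputable def cubicComb (c k m : ℕ) : RatFunc ℝ :=
  (c : RatFunc ℝ) * X ^ 3 + (k : RatFunc ℝ) * X + (m : RatFunc ℝ) * X ^ 2

lemma cubicComb_add (c k m c' k' m' : ℕ) :
    cubicComb c k m + cubicComb c' k' m' = cubicComb (c + c') (k + k') (m + m') := by
  simp only [cubicComb]; push_cast; ring

lemma cubicComb_injective {c k m c' k' m' : ℕ} (h : cubicComb c k m = cubicComb c' k' m') :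
    c = c' ∧ k = k' ∧ m = m' := by
  let p : ℕ → ℕ → ℕ → ℝ[X] := fun c k m =>
    (c : ℝ[X]) * Polynomial.X ^ 3 + (k : ℝ[X]) * Polynomial.X + (m : ℝ[X]) * Polynomial.X ^ 2
  have hp : ∀ c k m, cubicComb c k m = algebraMap ℝ[X] (RatFunc ℝ) (p c k m) := by
    intro c k m; simp [p, cubicComb]
  have hcoeff : ∀ c k m,
      (p c k m).coeff 3 = c ∧ (p c k m).coeff 1 = k ∧ (p c k m).coeff 2 = m := by
    intro c k m; simp [p, Polynomial.coeff_X_pow]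
  rw [hp, hp] at h
  have h := algebraMap_injective ℝ h
  obtain ⟨h3, h1, h2⟩ := hcoeff c k m
  obtain ⟨h3', h1', h2'⟩ := hcoeff c' k' m'
  rw [h] at h3 h1 h2
  exact ⟨mod_cast h3.symm.trans h3', mod_cast h1.symm.trans h1', mod_cast h2.symm.trans h2'⟩

@[simp]
lemma cubicComb_zero : cubicComb 0 0 0 = 0 := by simp [cubicComb]

lemma exists_cubicComb_of_mem_closure {x : RatFunc ℝ}
    (hx : x ∈ AddSubmonoid.closure generatorsP') :
    ∃ c k m, (k = 0 → m = 0) ∧ x = cubicComb c k m := by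
  induction hx using AddSubmonoid.closure_induction with
  | mem x hx =>
    rcases hx with rfl | ⟨n, -, rfl⟩
    · exact ⟨1, 0, 0, fun _ => rfl, by simp [cubicComb]⟩
    · exact ⟨0, 1, n, by omega, by simp [cubicComb]⟩
  | zero => exact ⟨0, 0, 0, fun _ => rfl, cubicComb_zero.symm⟩
  | add x y _ _ ihx ihy =>
    obtain ⟨c, k, m, hkm, rfl⟩ := ihx
    obtain ⟨c', k', m', hkm', rfl⟩ := ihy
    exact ⟨c + c', k + k', m + m', by omega, cubicComb_add ..⟩

lemma isAtomOf_closure_generatorsP' {a : RatFunc ℝ} (ha : a ∈ generatorsP') :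
    IsAtomOf (AddSubmonoid.closure generatorsP') a := by
  obtain ⟨c, k, m, hck, rfl⟩ : ∃ c k m, c + k = 1 ∧ a = cubicComb c k m := by
    rcases ha with rfl | ⟨n, -, rfl⟩
    · exact ⟨1, 0, 0, rfl, by simp [cubicComb]⟩
    · exact ⟨0, 1, n, rfl, by simp [cubicComb]⟩
  refine ⟨AddSubmonoid.subset_closure ha, fun h0 => ?_, fun x hx y hy hxy => ?_⟩
  · have := cubicComb_injective (h0.trans cubicComb_zero.symm)
    omega
  · obtain ⟨c₁, k₁, m₁, hkm₁, rfl⟩ := exists_cubicComb_of_mem_closure hx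
    obtain ⟨c₂, k₂, m₂, hkm₂, rfl⟩ := exists_cubicComb_of_mem_closure hy
    have := cubicComb_injective (hxy.trans (cubicComb_add ..))
    rcases (by omega : (c₁ = 0 ∧ k₁ = 0 ∧ m₁ = 0) ∨ (c₂ = 0 ∧ k₂ = 0 ∧ m₂ = 0)) with
      ⟨rfl, rfl, rfl⟩ | ⟨rfl, rfl, rfl⟩
    · exact Or.inl cubicComb_zero
    · exact Or.inr cubicComb_zero

lemma setOf_isAtomOf_closure_generatorsP' :
    {a | IsAtomOf (AddSubmonoid.closure generatorsP') a} = generatorsP' :=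
  Set.ext fun _ => ⟨fun ha => ha.mem_of_closure_eq rfl, isAtomOf_closure_generatorsP'⟩

lemma closure_generatorsP'_le_closure_X_pow :
    AddSubmonoid.closure generatorsP' ≤ AddSubmonoid.closure {f | ∃ n : ℕ, 0 < n ∧ f = X ^ n} := by
  have hX : ∀ n : ℕ, 0 < n →
      (X : RatFunc ℝ) ^ n ∈ AddSubmonoid.closure {f | ∃ n : ℕ, 0 < n ∧ f = X ^ n} :=
    fun n hn => AddSubmonoid.subset_closure ⟨n, hn, rfl⟩
  rw [AddSubmonoid.closure_le]
  rintro f (rfl | ⟨n, -, rfl⟩)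
  · exact hX 3 three_pos
  · rw [← nsmul_eq_mul]
    exact add_mem (by simpa using hX 1 one_pos) (nsmul_mem (hX 2 two_pos) n)

lemma not_ratFuncLe_X_pow_three (n : ℕ) :
    ¬ RatFuncLe (X ^ 3) (X + (n : RatFunc ℝ) * X ^ 2) := by
  have hdiff : X + (n : RatFunc ℝ) * X ^ 2 - X ^ 3 = algebraMap ℝ[X] (RatFunc ℝ)
      (-(Polynomial.X ^ 3 - (n : ℝ[X]) * Polynomial.X ^ 2 - Polynomial.X)) := by
    simp only [neg_sub, map_sub, algebraMap_X, map_pow, map_mul, map_natCast]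
    ring
  have hmonic : (Polynomial.X ^ 3 - (n : ℝ[X]) * Polynomial.X ^ 2 - Polynomial.X).Monic := by
    monicity!
  have hlc : (num (X + (n : RatFunc ℝ) * X ^ 2 - X ^ 3)).leadingCoeff = -1 := by
    rw [hdiff, num_algebraMap, Polynomial.leadingCoeff_neg, hmonic.leadingCoeff]
  rintro (h | h)
  · rw [← h, sub_self, num_zero, Polynomial.leadingCoeff_zero] at hlc
    norm_num at hlc
  · unfold RatFuncPos at h
    linarith

theorem rational_function_submonoid_not_increasing
    (P P' : AddSubmonoid (RatFunc ℝ))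
    (hP : AddSubmonoid.closure {f : RatFunc ℝ | ∃ n : ℕ, 0 < n ∧ f = RatFunc.X ^ n} = P)
    (hP' : AddSubmonoid.closure
        ({RatFunc.X ^ 3} ∪
          {f : RatFunc ℝ | ∃ n : ℕ, 0 < n ∧
            f = RatFunc.X + (n : RatFunc ℝ) * RatFunc.X ^ 2}) = P') :
    P' ≤ P ∧
      {a | IsAtomOf P' a} =
        {RatFunc.X ^ 3} ∪
          {f : RatFunc ℝ | ∃ n : ℕ, 0 < n ∧
            f = RatFunc.X + (n : RatFunc ℝ) * RatFunc.X ^ 2} ∧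
      ¬∃ u : ℕ → RatFunc ℝ, (∀ m n : ℕ, m ≤ n → RatFuncLe (u m) (u n)) ∧
        AddSubmonoid.closure (Set.range u) = P' := by
  subst hP hP'
  refine ⟨closure_generatorsP'_le_closure_X_pow, setOf_isAtomOf_closure_generatorsP', ?_⟩
  rintro ⟨u, hu, hu_gen⟩
  have hrange : ∀ a ∈ generatorsP', a ∈ Set.range u := fun _ ha =>
    (isAtomOf_closure_generatorsP' ha).mem_of_closure_eq hu_gen
  have hinj : Function.Injective fun n : ℕ => X + ((n + 1 : ℕ) : RatFunc ℝ) * X ^ 2 :=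
    fun n n' h => Nat.succ_injective <| Nat.cast_injective <|
      mul_right_cancel₀ (pow_ne_zero 2 X_ne_zero) (add_left_cancel h)
  exact not_monotone_of_infinite_not_above RatFuncLe (hrange _ (Or.inl rfl)) hinj
    (fun n => hrange _ (Or.inr ⟨n + 1, n.succ_pos, rfl⟩))
    (fun _ => not_ratFuncLe_X_pow_three _) hu
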